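/- Let $c \ge 0$ be an integer and let $\psi : \mathbb{R}^\times \to \mathbb{C}$ be a smooth function, rapidly decreasing with all derivatives at infinity, such that all one-sided limits $\psi^{(k)}(0\pm)$ exist and the jumps $\langle \psi^{(k)} \rangle_0 := \psi^{(k)}(0+)-\psi^{(k)}(0-)$ vanish for $0 \le k \le c-1$. Then for all real $y$: $\left| \int_{\mathbb{R}^\times} e^{-iy\xi}\psi(\xi)\,d\xi \right| \le \min\{1, |y|^{-c-1}\}\, \big( |\langle \psi^{(c)} \rangle_0| + \|\psi^{(c+1)}\|_1 + \|\psi\|_1 \big)$. -/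

import Mathlib

open MeasureTheory Filter Set Topology
open scoped ContDiff

lemma aux_contDiffAt_iteratedDeriv {ψ : ℝ → ℂ}
    (hsmooth : ∀ x : ℝ, x ≠ 0 → ContDiffAt ℝ (⊤ : ℕ∞) ψ x) (k : ℕ) :
    ∀ x : ℝ, x ≠ 0 → ContDiffAt ℝ (∞ : WithTop ℕ∞) (iteratedDeriv k ψ) x := by
  induction k with
  | zero => intro x hx; simpa [iteratedDeriv_zero] using (hsmooth x hx).of_le (by simp)
  | succ k ih =>
    intro x hx
    have h := ih x hx
    rw [contDiffAt_infty] at h ⊢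
    intro n
    obtain ⟨u, hu, hcd⟩ := (h (n+1)).contDiffOn le_rfl (by simp)
    have hux : interior u ∈ 𝓝 x := interior_mem_nhds.2 hu
    have hd : ContDiffOn ℝ n (deriv (iteratedDeriv k ψ)) (interior u) :=
      (hcd.mono interior_subset).deriv_of_isOpen isOpen_interior (by norm_cast)
    rw [iteratedDeriv_succ]
    exact hd.contDiffAt hux

theorem fourier_bound_jump (c : ℕ) (ψ : ℝ → ℂ)
    (hsmooth : ∀ x : ℝ, x ≠ 0 → ContDiffAt ℝ (⊤ : ℕ∞) ψ x)
    (hdecay : ∀ k n : ℕ, ∃ C : ℝ, ∀ ξ : ℝ, ξ ≠ 0 → |ξ| ^ n * ‖iteratedDeriv k ψ ξ‖ ≤ C)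
    (Lp Lm : ℕ → ℂ)
    (hLp : ∀ k, Tendsto (iteratedDeriv k ψ) (nhdsWithin 0 (Set.Ioi 0)) (nhds (Lp k)))
    (hLm : ∀ k, Tendsto (iteratedDeriv k ψ) (nhdsWithin 0 (Set.Iio 0)) (nhds (Lm k)))
    (hjump : ∀ k < c, Lp k = Lm k) (y : ℝ) :
    ‖∫ ξ in ({0}ᶜ : Set ℝ), Complex.exp (-(Complex.I * y * ξ)) * ψ ξ‖ ≤
      (if y = 0 then (1 : ℝ) else min 1 (|y| ^ (-(c : ℤ) - 1))) *
        (‖Lp c - Lm c‖ + (∫ ξ in ({0}ᶜ : Set ℝ), ‖iteratedDeriv (c + 1) ψ ξ‖) +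
          ∫ ξ in ({0}ᶜ : Set ℝ), ‖ψ ξ‖) := by
  classical
  have hSm : MeasurableSet ({0}ᶜ : Set ℝ) := isOpen_compl_singleton.measurableSet
  have hsm := aux_contDiffAt_iteratedDeriv hsmooth
  have hcont : ∀ k, ContinuousOn (iteratedDeriv k ψ) ({0}ᶜ : Set ℝ) :=
    fun k x hx => ((hsm k x hx).continuousAt).continuousWithinAt
  have hderiv : ∀ (k : ℕ) (x : ℝ), x ≠ 0 →
      HasDerivAt (iteratedDeriv k ψ) (iteratedDeriv (k+1) ψ x) x := by
    intro k x hx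
    have h := (hsm k x hx).differentiableAt (by norm_num)
    rw [iteratedDeriv_succ]
    exact h.hasDerivAt
  -- integrability of iterated derivatives
  have hInt : ∀ k, IntegrableOn (iteratedDeriv k ψ) ({0}ᶜ : Set ℝ) := by
    intro k
    obtain ⟨C0, hC0⟩ := hdecay k 0
    obtain ⟨C2, hC2⟩ := hdecay k 2
    have hg : Integrable (fun ξ : ℝ => (C0 + C2) * (1 + ξ^2)⁻¹) :=
      integrable_inv_one_add_sq.const_mul _
    refine Integrable.mono' hg.restrict ((hcont k).aestronglyMeasurable hSm) ?_
    filter_upwards [ae_restrict_mem hSm] with ξ hξ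
    have h1 : ‖iteratedDeriv k ψ ξ‖ ≤ C0 := by simpa using hC0 ξ hξ
    have h2 : ξ^2 * ‖iteratedDeriv k ψ ξ‖ ≤ C2 := by
      have := hC2 ξ hξ; rwa [sq_abs] at this
    have hpos : (0:ℝ) < 1 + ξ^2 := by positivity
    have : ‖iteratedDeriv k ψ ξ‖ ≤ (C0 + C2) / (1 + ξ^2) := by
      rw [le_div_iff₀ hpos]
      nlinarith [norm_nonneg (iteratedDeriv k ψ ξ)]
    simpa [div_eq_mul_inv] using this
  -- norm of the exponential
  have hE1 : ∀ ξ : ℝ, ‖Complex.exp (-(Complex.I * y * ξ))‖ = 1 := by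
    intro ξ
    rw [Complex.norm_exp]
    simp [Complex.mul_re]
  -- continuity of the exponential factor
  have hEcont : Continuous fun ξ : ℝ => Complex.exp (-(Complex.I * y * ξ)) := by
    continuity
  -- integrability of exponential * iterated derivative
  have hIntE : ∀ k, IntegrableOn
      (fun ξ : ℝ => Complex.exp (-(Complex.I * y * ξ)) * iteratedDeriv k ψ ξ)
      ({0}ᶜ : Set ℝ) := by
    intro k
    refine Integrable.mono' (hInt k).norm
      ((hEcont.continuousOn.mul (hcont k)).aestronglyMeasurable hSm) ?_
    filter_upwards with ξ
    rw [norm_mul, hE1, one_mul]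
  -- tendsto 0 at infinity
  have hZtop : ∀ k, Tendsto
      (fun ξ : ℝ => Complex.exp (-(Complex.I * y * ξ)) * iteratedDeriv k ψ ξ)
      atTop (𝓝 0) := by
    intro k
    obtain ⟨C, hC⟩ := hdecay k 1
    refine squeeze_zero_norm' ?_
      (tendsto_const_nhds.div_atTop (tendsto_abs_atTop_atTop) : Tendsto (fun ξ : ℝ => C / |ξ|) atTop (𝓝 0))
    filter_upwards [eventually_gt_atTop (0:ℝ)] with ξ hξ
    rw [norm_mul, hE1, one_mul, le_div_iff₀ (abs_pos.2 (ne_of_gt hξ)), mul_comm]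
    simpa using hC ξ (ne_of_gt hξ)
  have hZbot : ∀ k, Tendsto
      (fun ξ : ℝ => Complex.exp (-(Complex.I * y * ξ)) * iteratedDeriv k ψ ξ)
      atBot (𝓝 0) := by
    intro k
    obtain ⟨C, hC⟩ := hdecay k 1
    refine squeeze_zero_norm' ?_
      (tendsto_const_nhds.div_atTop tendsto_abs_atBot_atTop :
        Tendsto (fun ξ : ℝ => C / |ξ|) atBot (𝓝 0))
    filter_upwards [eventually_lt_atBot (0:ℝ)] with ξ hξ
    rw [norm_mul, hE1, one_mul, le_div_iff₀ (abs_pos.2 (ne_of_lt hξ)), mul_comm]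
    simpa using hC ξ (ne_of_lt hξ)
  -- derivative of the exponential
  have hEd : ∀ x : ℝ, HasDerivAt (fun ξ : ℝ => Complex.exp (-(Complex.I * y * ξ)))
      (-(Complex.I * y) * Complex.exp (-(Complex.I * y * x))) x := by
    intro x
    have h0 : HasDerivAt (fun w : ℂ => -(Complex.I * y * w)) (-(Complex.I * y)) (x:ℂ) := by
      simpa using ((hasDerivAt_id' (x:ℂ)).const_mul (Complex.I * y)).fun_neg
    have h1 : HasDerivAt (fun w : ℂ => Complex.exp (-(Complex.I * y * w)))
        (-(Complex.I * y) * Complex.exp (-(Complex.I * y * x))) (x:ℂ) := by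
      simpa [mul_comm, Function.comp_def] using (Complex.hasDerivAt_exp (-(Complex.I * y * x))).comp (x:ℂ) h0
    exact h1.comp_ofReal
  -- derivative of the product
  have hFd : ∀ (k : ℕ) (x : ℝ), x ≠ 0 → HasDerivAt
      (fun ξ : ℝ => Complex.exp (-(Complex.I * y * ξ)) * iteratedDeriv k ψ ξ)
      (Complex.exp (-(Complex.I * y * x)) * iteratedDeriv (k+1) ψ x
        - (Complex.I * y) * (Complex.exp (-(Complex.I * y * x)) * iteratedDeriv k ψ x)) x := by
    intro k x hx
    have h := (hEd x).fun_mul (hderiv k x hx)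
    exact h.congr_deriv (by ring)
  -- integration by parts on the right half line
  have hIoi : ∀ k : ℕ, (∫ ξ in Ioi (0:ℝ),
      (Complex.exp (-(Complex.I * y * ξ)) * iteratedDeriv (k+1) ψ ξ
        - (Complex.I * y) * (Complex.exp (-(Complex.I * y * ξ)) * iteratedDeriv k ψ ξ)))
      = -(Lp k) := by
    intro k
    set F : ℝ → ℂ := fun ξ => Complex.exp (-(Complex.I * y * ξ)) * iteratedDeriv k ψ ξ with hFdef
    set G : ℝ → ℂ := fun ξ => if ξ ≤ 0 then Lp k else F ξ with hGdef
    have hG0 : G 0 = Lp k := by simp [hGdef]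
    have htend : Tendsto F (𝓝[>] (0:ℝ)) (𝓝 (Lp k)) := by
      have hE : Tendsto (fun ξ : ℝ => Complex.exp (-(Complex.I * y * ξ))) (𝓝[>] (0:ℝ)) (𝓝 1) := by
        have := (hEcont.tendsto 0).mono_left (nhdsWithin_le_nhds (s := Ioi (0:ℝ)))
        simpa using this
      simpa using hE.mul (hLp k)
    have hGcont : ContinuousWithinAt G (Ici 0) 0 := by
      rw [show Ici (0:ℝ) = insert 0 (Ioi 0) from (Set.Ioi_insert (a := (0:ℝ))).symm]
      apply continuousWithinAt_insert_self.2
      unfold ContinuousWithinAt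
      rw [hG0]
      refine htend.congr' ?_
      filter_upwards [self_mem_nhdsWithin] with ξ (hξ : ξ ∈ Ioi 0)
      simp [hGdef, hFdef, not_le.2 (show (0:ℝ) < ξ from hξ)]
    have hGd : ∀ x ∈ Ioi (0:ℝ), HasDerivAt G
        (Complex.exp (-(Complex.I * y * x)) * iteratedDeriv (k+1) ψ x
          - (Complex.I * y) * (Complex.exp (-(Complex.I * y * x)) * iteratedDeriv k ψ x)) x := by
      intro x hx
      refine (hFd k x (ne_of_gt hx)).congr_of_eventuallyEq ?_
      filter_upwards [isOpen_Ioi.mem_nhds hx] with t (ht : t ∈ Ioi 0)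
      simp [hGdef, hFdef, not_le.2 (show (0:ℝ) < t from ht)]
    have hsub : Ioi (0:ℝ) ⊆ ({0}ᶜ : Set ℝ) := fun x hx => ne_of_gt hx
    have hint : IntegrableOn (fun ξ : ℝ =>
        Complex.exp (-(Complex.I * y * ξ)) * iteratedDeriv (k+1) ψ ξ
          - (Complex.I * y) * (Complex.exp (-(Complex.I * y * ξ)) * iteratedDeriv k ψ ξ))
        (Ioi 0) :=
      ((hIntE (k+1)).mono_set hsub).sub (((hIntE k).mono_set hsub).const_mul _)
    have hGtop : Tendsto G atTop (𝓝 0) := by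
      refine (hZtop k).congr' ?_
      filter_upwards [eventually_gt_atTop (0:ℝ)] with ξ hξ
      simp [hGdef, hFdef, not_le.2 (show (0:ℝ) < ξ from hξ)]
    have h := integral_Ioi_of_hasDerivAt_of_tendsto hGcont hGd hint hGtop
    rw [hG0, zero_sub] at h
    exact h
  -- integration by parts on the left half line
  have hIio : ∀ k : ℕ, (∫ ξ in Iio (0:ℝ),
      (Complex.exp (-(Complex.I * y * ξ)) * iteratedDeriv (k+1) ψ ξ
        - (Complex.I * y) * (Complex.exp (-(Complex.I * y * ξ)) * iteratedDeriv k ψ ξ)))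
      = Lm k := by
    intro k
    set F : ℝ → ℂ := fun ξ => Complex.exp (-(Complex.I * y * ξ)) * iteratedDeriv k ψ ξ with hFdef
    set G : ℝ → ℂ := fun ξ => if ξ < 0 then F ξ else Lm k with hGdef
    have hG0 : G 0 = Lm k := by simp [hGdef]
    have htend : Tendsto F (𝓝[<] (0:ℝ)) (𝓝 (Lm k)) := by
      have hE : Tendsto (fun ξ : ℝ => Complex.exp (-(Complex.I * y * ξ))) (𝓝[<] (0:ℝ)) (𝓝 1) := by
        have := (hEcont.tendsto 0).mono_left (nhdsWithin_le_nhds (s := Iio (0:ℝ)))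
        simpa using this
      simpa using hE.mul (hLm k)
    have hGcont : ContinuousWithinAt G (Iic 0) 0 := by
      rw [show Iic (0:ℝ) = insert 0 (Iio 0) from (Set.Iio_insert (a := (0:ℝ))).symm]
      apply continuousWithinAt_insert_self.2
      unfold ContinuousWithinAt
      rw [hG0]
      refine htend.congr' ?_
      filter_upwards [self_mem_nhdsWithin] with ξ (hξ : ξ ∈ Iio 0)
      simp [hGdef, hFdef, hξ.out]
    have hGd : ∀ x ∈ Iio (0:ℝ), HasDerivAt G
        (Complex.exp (-(Complex.I * y * x)) * iteratedDeriv (k+1) ψ x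
          - (Complex.I * y) * (Complex.exp (-(Complex.I * y * x)) * iteratedDeriv k ψ x)) x := by
      intro x hx
      refine (hFd k x (ne_of_lt hx)).congr_of_eventuallyEq ?_
      filter_upwards [isOpen_Iio.mem_nhds hx] with t (ht : t ∈ Iio 0)
      simp [hGdef, hFdef, ht.out]
    have hsub : Iio (0:ℝ) ⊆ ({0}ᶜ : Set ℝ) := fun x hx => ne_of_lt hx
    have hintIio : IntegrableOn (fun ξ : ℝ =>
        Complex.exp (-(Complex.I * y * ξ)) * iteratedDeriv (k+1) ψ ξ
          - (Complex.I * y) * (Complex.exp (-(Complex.I * y * ξ)) * iteratedDeriv k ψ ξ))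
        (Iio 0) :=
      ((hIntE (k+1)).mono_set hsub).sub (((hIntE k).mono_set hsub).const_mul _)
    have hint : IntegrableOn (fun ξ : ℝ =>
        Complex.exp (-(Complex.I * y * ξ)) * iteratedDeriv (k+1) ψ ξ
          - (Complex.I * y) * (Complex.exp (-(Complex.I * y * ξ)) * iteratedDeriv k ψ ξ))
        (Iic 0) := by
      rw [show Iic (0:ℝ) = insert 0 (Iio 0) from (Set.Iio_insert (a := (0:ℝ))).symm,
        Set.insert_eq]
      refine IntegrableOn.union ?_ hintIio
      exact (integrableOn_singleton_iff (by finiteness)).2 (Or.inr (by simp [measure_singleton]))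
    have hGbot : Tendsto G atBot (𝓝 0) := by
      refine (hZbot k).congr' ?_
      filter_upwards [eventually_lt_atBot (0:ℝ)] with ξ hξ
      simp [hGdef, hFdef, hξ]
    have h := integral_Iic_of_hasDerivAt_of_tendsto hGcont hGd hint hGbot
    rw [hG0, sub_zero] at h
    rw [← integral_Iic_eq_integral_Iio]
    exact h
  -- key recursion
  have hkey : ∀ k : ℕ, (Complex.I * y) *
      (∫ ξ in ({0}ᶜ : Set ℝ), Complex.exp (-(Complex.I * y * ξ)) * iteratedDeriv k ψ ξ)
      = (Lp k - Lm k) +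
        ∫ ξ in ({0}ᶜ : Set ℝ), Complex.exp (-(Complex.I * y * ξ)) * iteratedDeriv (k+1) ψ ξ := by
    intro k
    have hsub1 : Iio (0:ℝ) ⊆ ({0}ᶜ : Set ℝ) := fun x hx => ne_of_lt hx
    have hsub2 : Ioi (0:ℝ) ⊆ ({0}ᶜ : Set ℝ) := fun x hx => ne_of_gt hx
    have hintf : IntegrableOn (fun ξ : ℝ =>
        Complex.exp (-(Complex.I * y * ξ)) * iteratedDeriv (k+1) ψ ξ
          - (Complex.I * y) * (Complex.exp (-(Complex.I * y * ξ)) * iteratedDeriv k ψ ξ))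
        ({0}ᶜ : Set ℝ) := (hIntE (k+1)).sub ((hIntE k).const_mul _)
    have h3 : (∫ ξ in ({0}ᶜ : Set ℝ),
        (Complex.exp (-(Complex.I * y * ξ)) * iteratedDeriv (k+1) ψ ξ
          - (Complex.I * y) * (Complex.exp (-(Complex.I * y * ξ)) * iteratedDeriv k ψ ξ)))
        = Lm k + -(Lp k) := by
      rw [show ({0}ᶜ : Set ℝ) = Iio 0 ∪ Ioi 0 from (Set.Iio_union_Ioi (a := (0:ℝ))).symm,
        setIntegral_union ((Set.Iic_disjoint_Ioi le_rfl).mono_left Set.Iio_subset_Iic_self)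
          measurableSet_Ioi (hintf.mono_set hsub1) (hintf.mono_set hsub2),
        hIio k, hIoi k]
    rw [integral_sub (hIntE (k+1)) ((hIntE k).const_mul _),
      integral_const_mul] at h3
    linear_combination -h3
  -- iterate below the jump order
  have hiter : ∀ j : ℕ, j ≤ c →
      (∫ ξ in ({0}ᶜ : Set ℝ), Complex.exp (-(Complex.I * y * ξ)) * iteratedDeriv j ψ ξ)
      = (Complex.I * y)^j *
        ∫ ξ in ({0}ᶜ : Set ℝ), Complex.exp (-(Complex.I * y * ξ)) * iteratedDeriv 0 ψ ξ := by
    intro j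
    induction j with
    | zero => intro _; simp
    | succ j ih =>
      intro hj
      have hjc : j < c := Nat.lt_of_succ_le hj
      have hk := hkey j
      rw [hjump j hjc, sub_self, zero_add] at hk
      rw [← hk, ih hjc.le, pow_succ]
      ring
  have hfinal : (Complex.I * y)^(c+1) *
      (∫ ξ in ({0}ᶜ : Set ℝ), Complex.exp (-(Complex.I * y * ξ)) * iteratedDeriv 0 ψ ξ)
      = (Lp c - Lm c) +
        ∫ ξ in ({0}ᶜ : Set ℝ), Complex.exp (-(Complex.I * y * ξ)) * iteratedDeriv (c+1) ψ ξ := by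
    rw [show (Complex.I * y)^(c+1) *
        (∫ ξ in ({0}ᶜ : Set ℝ), Complex.exp (-(Complex.I * y * ξ)) * iteratedDeriv 0 ψ ξ)
        = (Complex.I * y) * ((Complex.I * y)^c *
          ∫ ξ in ({0}ᶜ : Set ℝ), Complex.exp (-(Complex.I * y * ξ)) * iteratedDeriv 0 ψ ξ)
        from by ring, ← hiter c le_rfl]
    exact hkey c
  -- norm bounds
  have hnorm : ∀ k : ℕ,
      ‖∫ ξ in ({0}ᶜ : Set ℝ), Complex.exp (-(Complex.I * y * ξ)) * iteratedDeriv k ψ ξ‖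
      ≤ ∫ ξ in ({0}ᶜ : Set ℝ), ‖iteratedDeriv k ψ ξ‖ := by
    intro k
    refine (norm_integral_le_integral_norm _).trans (le_of_eq ?_)
    refine setIntegral_congr_fun hSm fun ξ _ => ?_
    rw [norm_mul, hE1, one_mul]
  have hgoal : (∫ ξ in ({0}ᶜ : Set ℝ), Complex.exp (-(Complex.I * y * ξ)) * ψ ξ)
      = ∫ ξ in ({0}ᶜ : Set ℝ), Complex.exp (-(Complex.I * y * ξ)) * iteratedDeriv 0 ψ ξ := by
    simp [iteratedDeriv_zero]
  have hB : (0:ℝ) ≤ ∫ ξ in ({0}ᶜ : Set ℝ), ‖iteratedDeriv (c+1) ψ ξ‖ :=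
    integral_nonneg fun _ => norm_nonneg _
  have hD0 : ‖∫ ξ in ({0}ᶜ : Set ℝ), Complex.exp (-(Complex.I * y * ξ)) * iteratedDeriv 0 ψ ξ‖
      ≤ ∫ ξ in ({0}ᶜ : Set ℝ), ‖ψ ξ‖ := by
    simpa [iteratedDeriv_zero] using hnorm 0
  rw [hgoal]
  by_cases hy : y = 0
  · rw [if_pos hy, one_mul]
    have := hD0
    linarith [norm_nonneg (Lp c - Lm c)]
  · rw [if_neg hy]
    have hyabs : (0:ℝ) < |y| := abs_pos.2 hy
    have ht0 : (0:ℝ) ≤ |y| ^ (-(c:ℤ) - 1) := zpow_nonneg (abs_nonneg y) _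
    have hXnn : (0:ℝ) ≤ ‖Lp c - Lm c‖ + (∫ ξ in ({0}ᶜ : Set ℝ), ‖iteratedDeriv (c+1) ψ ξ‖)
        + ∫ ξ in ({0}ᶜ : Set ℝ), ‖ψ ξ‖ := by
      have : (0:ℝ) ≤ ∫ ξ in ({0}ᶜ : Set ℝ), ‖ψ ξ‖ := integral_nonneg fun _ => norm_nonneg _
      linarith [norm_nonneg (Lp c - Lm c)]
    rw [min_mul_of_nonneg _ _ hXnn]
    refine le_min ?_ ?_
    · rw [one_mul]
      linarith [norm_nonneg (Lp c - Lm c)]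
    · have hpow : (0:ℝ) < |y|^(c+1) := pow_pos hyabs _
      have hnormIy : ‖Complex.I * (y:ℂ)‖ = |y| := by simp
      have hmain : |y|^(c+1) *
          ‖∫ ξ in ({0}ᶜ : Set ℝ), Complex.exp (-(Complex.I * y * ξ)) * iteratedDeriv 0 ψ ξ‖
          ≤ ‖Lp c - Lm c‖ + ∫ ξ in ({0}ᶜ : Set ℝ), ‖iteratedDeriv (c+1) ψ ξ‖ := by
        calc |y|^(c+1) *
            ‖∫ ξ in ({0}ᶜ : Set ℝ), Complex.exp (-(Complex.I * y * ξ)) * iteratedDeriv 0 ψ ξ‖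
            = ‖(Complex.I * y)^(c+1) *
              ∫ ξ in ({0}ᶜ : Set ℝ), Complex.exp (-(Complex.I * y * ξ)) * iteratedDeriv 0 ψ ξ‖ := by
              rw [norm_mul, norm_pow, hnormIy]
          _ = ‖(Lp c - Lm c) +
              ∫ ξ in ({0}ᶜ : Set ℝ), Complex.exp (-(Complex.I * y * ξ)) * iteratedDeriv (c+1) ψ ξ‖ := by
              rw [hfinal]
          _ ≤ ‖Lp c - Lm c‖ +
              ‖∫ ξ in ({0}ᶜ : Set ℝ), Complex.exp (-(Complex.I * y * ξ)) * iteratedDeriv (c+1) ψ ξ‖ :=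
              norm_add_le _ _
          _ ≤ ‖Lp c - Lm c‖ + ∫ ξ in ({0}ᶜ : Set ℝ), ‖iteratedDeriv (c+1) ψ ξ‖ := by
              linarith [hnorm (c+1)]
      have ht : |y| ^ (-(c:ℤ) - 1) = (|y|^(c+1))⁻¹ := by
        rw [show (-(c:ℤ) - 1) = -((c+1 : ℕ) : ℤ) from by push_cast; ring, zpow_neg, zpow_natCast]
      rw [ht]
      have hDnn : (0:ℝ) ≤ ∫ ξ in ({0}ᶜ : Set ℝ), ‖ψ ξ‖ := integral_nonneg fun _ => norm_nonneg _
      calc ‖∫ ξ in ({0}ᶜ : Set ℝ), Complex.exp (-(Complex.I * y * ξ)) * iteratedDeriv 0 ψ ξ‖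
          = (|y|^(c+1))⁻¹ * (|y|^(c+1) *
            ‖∫ ξ in ({0}ᶜ : Set ℝ), Complex.exp (-(Complex.I * y * ξ)) * iteratedDeriv 0 ψ ξ‖) := by
            field_simp
        _ ≤ (|y|^(c+1))⁻¹ * (‖Lp c - Lm c‖ +
            ∫ ξ in ({0}ᶜ : Set ℝ), ‖iteratedDeriv (c+1) ψ ξ‖) := by
            exact mul_le_mul_of_nonneg_left hmain (inv_nonneg.2 hpow.le)
        _ ≤ (|y|^(c+1))⁻¹ * (‖Lp c - Lm c‖ +
            (∫ ξ in ({0}ᶜ : Set ℝ), ‖iteratedDeriv (c+1) ψ ξ‖) +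
            ∫ ξ in ({0}ᶜ : Set ℝ), ‖ψ ξ‖) := by
            refine mul_le_mul_of_nonneg_left (by linarith) (inv_nonneg.2 hpow.le)
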